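/- The operator D is negative semi-definite: for every locally constant function f : E → ℝ, ∫_E (Df)(x) f(x) dμ×(x) ≤ 0. -/

import Mathlib

/-!
Substituting `dμ× = dμ⁺ / |x|` turns the form into
`∬_{E × E} (f z - f x) f x / |z - x|² dμ⁺(z) dμ⁺(x)`. On the compact set `E` a locally
constant `f` is bounded and uniformly locally constant (Lebesgue number lemma), so the
integrand vanishes near the diagonal and is bounded, hence integrable on `E × E`. By Fubini,
swapping `x` and `z` and averaging gives `-½ ∬ (f z - f x)² / |z - x|² ≤ 0`.
-/

open MeasureTheory

noncomputable section

/-- The fundamental domain `E = ⋃_{s=0}^{m-1} p^s ℤ_p^×` of the Tate curve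
`ℚ_p^×/p^{mℤ}`, described as the set of `x` with `p^{-(m-1)} ≤ |x| ≤ 1`
(such an `x` is automatically nonzero). -/
def Efund (p m : ℕ) [Fact p.Prime] : Set ℚ_[p] :=
  {x | (p : ℝ) ^ (1 - (m : ℤ)) ≤ ‖x‖ ∧ ‖x‖ ≤ 1}

/-- The operator `(Dφ)(x) = |x| ∫_E (φ(z) − φ(x))/|z − x|² dμ⁺(z)`. -/
def Dop (p m : ℕ) [Fact p.Prime] [MeasurableSpace ℚ_[p]]
    (μ : Measure ℚ_[p]) (φ : ℚ_[p] → ℝ) (x : ℚ_[p]) : ℝ :=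
  ‖x‖ * ∫ z in Efund p m, (φ z - φ x) / ‖z - x‖ ^ 2 ∂μ

/-- The multiplicative measure `dμ× = dμ⁺/|x|`. -/
def mulMeasure (p : ℕ) [Fact p.Prime] [MeasurableSpace ℚ_[p]]
    (μ : Measure ℚ_[p]) : Measure ℚ_[p] :=
  μ.withDensity fun x => ENNReal.ofReal (1 / ‖x‖)

/-- `f` is locally constant on `E`: every point of `E` has a neighborhood in `E`
on which `f` is constant. -/
def LocConstOn (p m : ℕ) [Fact p.Prime] (f : ℚ_[p] → ℝ) : Prop :=
  ∀ x ∈ Efund p m, ∃ n : ℕ,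
    ∀ y ∈ Efund p m, ‖y - x‖ ≤ (p : ℝ) ^ (-(n : ℤ)) → f y = f x

open Metric

theorem IsLocallyConstant.exists_pos_forall_dist_lt_imp_eq {X Y : Type*} [PseudoMetricSpace X]
    [CompactSpace X] {g : X → Y} (hg : IsLocallyConstant g) :
    ∃ δ > 0, ∀ x y, dist x y < δ → g x = g y := by
  obtain ⟨δ, hδ, hball⟩ := lebesgue_number_lemma_of_metric isCompact_univ
    (c := fun y => {x | g x = y}) hg.isOpen_fiber fun x _ => Set.mem_iUnion.2 ⟨g x, rfl⟩
  refine ⟨δ, hδ, fun x y hxy => ?_⟩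
  obtain ⟨c, hc⟩ := hball x trivial
  exact (hc (mem_ball_self hδ)).trans (hc (mem_ball'.2 hxy)).symm

theorem integral_integral_sub_mul_kernel_mul_nonpos {α : Type*} [MeasurableSpace α]
    {ν : Measure α} [SFinite ν] (f : α → ℝ) (k : α → α → ℝ)
    (hk_symm : ∀ x z, k x z = k z x) (hk_nonneg : ∀ x z, 0 ≤ k x z)
    (hint : Integrable (fun q : α × α => (f q.2 - f q.1) * k q.1 q.2 * f q.1) (ν.prod ν)) :
    ∫ x, ∫ z, (f z - f x) * k x z * f x ∂ν ∂ν ≤ 0 := by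
  set F : α × α → ℝ := fun q => (f q.2 - f q.1) * k q.1 q.2 * f q.1
  have h_swap : ∫ q, F q.swap ∂(ν.prod ν) = ∫ q, F q ∂(ν.prod ν) := integral_prod_swap F
  have h_sum : ∫ q, (F q + F q.swap) ∂(ν.prod ν) ≤ 0 := by
    refine integral_nonpos fun q => ?_
    have : F q + F q.swap = -((f q.2 - f q.1) ^ 2 * k q.1 q.2) := by
      simp only [F, Prod.fst_swap, Prod.snd_swap, hk_symm q.2 q.1]
      ring
    rw [this, Pi.zero_apply, neg_nonpos]
    exact mul_nonneg (sq_nonneg _) (hk_nonneg _ _)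
  have h_add : ∫ q, (F q + F q.swap) ∂(ν.prod ν) = 2 * ∫ q, F q ∂(ν.prod ν) := by
    rw [two_mul]
    nth_rw 2 [← h_swap]
    exact integral_add hint hint.swap
  rw [← integral_prod F hint]
  linarith

section NormedGroup

variable {G : Type*} [NormedAddCommGroup G] {K : Set G} {f : G → ℝ}

theorem exists_abs_sub_mul_inv_norm_sq_mul_le (hK : IsCompact K)
    (hf : IsLocallyConstant (K.domRestrict f)) :
    ∃ C, ∀ x ∈ K, ∀ z ∈ K, |(f z - f x) * (‖z - x‖ ^ 2)⁻¹ * f x| ≤ C := by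
  have := isCompact_iff_compactSpace.1 hK
  obtain ⟨δ, hδ, hconst⟩ := hf.exists_pos_forall_dist_lt_imp_eq
  obtain ⟨M, hM⟩ := hK.exists_bound_of_continuousOn
    (continuousOn_iff_continuous_domRestrict.2 hf.continuous)
  simp only [Real.norm_eq_abs] at hM
  refine ⟨2 * M * (δ ^ 2)⁻¹ * M, fun x hx z hz => ?_⟩
  have hM0 : 0 ≤ M := (abs_nonneg _).trans (hM x hx)
  rcases lt_or_ge ‖z - x‖ δ with hzx | hzx
  · have : f z = f x := hconst ⟨z, hz⟩ ⟨x, hx⟩ (by rwa [Subtype.dist_eq, dist_eq_norm])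
    simp only [this, sub_self, zero_mul, abs_zero]
    positivity
  · have hdiff : |f z - f x| ≤ 2 * M := (abs_sub _ _).trans (by linarith [hM z hz, hM x hx])
    rw [abs_mul, abs_mul, abs_inv, abs_pow, abs_norm]
    gcongr
    exact hM x hx

theorem integrable_sub_mul_inv_norm_sq_mul [MeasurableSpace G] [BorelSpace G]
    [SecondCountableTopology G] {μ : Measure G} [IsFiniteMeasureOnCompacts μ]
    (hK : IsCompact K) (hf : IsLocallyConstant (K.domRestrict f)) :
    Integrable (fun q : G × G => (f q.2 - f q.1) * (‖q.2 - q.1‖ ^ 2)⁻¹ * f q.1)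
      ((μ.restrict K).prod (μ.restrict K)) := by
  have hK_meas := hK.measurableSet
  have : IsFiniteMeasure (μ.restrict K) := isFiniteMeasure_restrict.2 hK.measure_lt_top.ne
  have hf_meas : AEMeasurable f (μ.restrict K) :=
    (continuousOn_iff_continuous_domRestrict.2 hf.continuous).aemeasurable hK_meas
  obtain ⟨C, hC⟩ := exists_abs_sub_mul_inv_norm_sq_mul_le hK hf
  refine Integrable.of_bound (C := C) ?_ ?_
  · have hk : Measurable fun q : G × G => (‖q.2 - q.1‖ ^ 2)⁻¹ := by fun_prop
    exact (((hf_meas.comp_snd.sub hf_meas.comp_fst).mul hk.aemeasurable).mul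
      hf_meas.comp_fst).aestronglyMeasurable
  · have hK_ae : ∀ᵐ x ∂μ.restrict K, x ∈ K := ae_restrict_mem hK_meas
    filter_upwards [(Measure.ae_prod_mem_iff_ae_ae_mem (hK_meas.prod hK_meas)).2
      (hK_ae.mono fun x hx => hK_ae.mono fun z hz => ⟨hx, hz⟩)] with q hq
    exact hC q.1 hq.1 q.2 hq.2

end NormedGroup

section Padic

variable {p m : ℕ} [Fact p.Prime]

theorem norm_pos_of_mem_Efund {x : ℚ_[p]} (hx : x ∈ Efund p m) : 0 < ‖x‖ :=
  (zpow_pos (by exact_mod_cast (Fact.out : p.Prime).pos) _).trans_le hx.1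

theorem isCompact_Efund : IsCompact (Efund p m) :=
  (isCompact_closedBall 0 1).of_isClosed_subset
    ((isClosed_le continuous_const continuous_norm).inter
      (isClosed_le continuous_norm continuous_const))
    fun _ hx => mem_closedBall_zero_iff.2 hx.2

theorem LocConstOn.isLocallyConstant_domRestrict {f : ℚ_[p] → ℝ} (hf : LocConstOn p m f) :
    IsLocallyConstant ((Efund p m).domRestrict f) := by
  refine (IsLocallyConstant.iff_eventually_eq _).2 fun x => ?_
  obtain ⟨n, hn⟩ := hf x x.2
  have hr : (0 : ℝ) < (p : ℝ) ^ (-(n : ℤ)) :=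
    zpow_pos (by exact_mod_cast (Fact.out : p.Prime).pos) _
  filter_upwards [ball_mem_nhds x hr] with y hy
  exact hn y y.2 (by rw [← dist_eq_norm, ← Subtype.dist_eq]; exact (mem_ball.1 hy).le)

theorem setIntegral_Dop_mul_mulMeasure [MeasurableSpace ℚ_[p]] [BorelSpace ℚ_[p]]
    (μ : Measure ℚ_[p]) (f : ℚ_[p] → ℝ) :
    ∫ x in Efund p m, Dop p m μ f x * f x ∂(mulMeasure p μ) =
      ∫ x in Efund p m, ∫ z in Efund p m, (f z - f x) / ‖z - x‖ ^ 2 * f x ∂μ ∂μ := by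
  have hE := (isCompact_Efund (p := p) (m := m)).measurableSet
  rw [mulMeasure, setIntegral_withDensity_eq_setIntegral_toReal_smul (by fun_prop)
    (ae_of_all _ fun _ => ENNReal.ofReal_lt_top) _ hE]
  refine setIntegral_congr_fun hE fun x hx => ?_
  rw [ENNReal.toReal_ofReal (by positivity), smul_eq_mul, Dop, integral_mul_const]
  field_simp [(norm_pos_of_mem_Efund hx).ne']

end Padic

theorem Dop_negSemidef_general (p m : ℕ) [Fact p.Prime]
    [MeasurableSpace ℚ_[p]] [BorelSpace ℚ_[p]]
    (μ : Measure ℚ_[p]) [μ.IsAddHaarMeasure]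
    (f : ℚ_[p] → ℝ) (hf : LocConstOn p m f) :
    ∫ x in Efund p m, Dop p m μ f x * f x ∂(mulMeasure p μ) ≤ 0 := by
  rw [setIntegral_Dop_mul_mulMeasure]
  simp_rw [div_eq_mul_inv]
  exact integral_integral_sub_mul_kernel_mul_nonpos f (fun x z => (‖z - x‖ ^ 2)⁻¹)
    (fun x z => by rw [norm_sub_rev]) (fun x z => by positivity)
    (integrable_sub_mul_inv_norm_sq_mul isCompact_Efund hf.isLocallyConstant_domRestrict)

/-- The operator `D` is negative semi-definite: for every locally
constant `f : E → ℝ`, `∫_E (Df)(x) f(x) dμ×(x) ≤ 0`. -/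
theorem Dop_negSemidef (p m : ℕ) [Fact p.Prime] (hm : 1 ≤ m)
    [MeasurableSpace ℚ_[p]] [BorelSpace ℚ_[p]]
    (μ : Measure ℚ_[p]) [μ.IsAddHaarMeasure]
    (hμ : μ (Metric.closedBall 0 1) = 1)
    (f : ℚ_[p] → ℝ) (hf : LocConstOn p m f) :
    ∫ x in Efund p m, Dop p m μ f x * f x ∂(mulMeasure p μ) ≤ 0 :=
  Dop_negSemidef_general p m μ f hf
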